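/- arXiv:2006.00601 — 2 statements merged into one kernel-verified Lean document; each statement's English description precedes it below -/
import Mathlib

section
/- Let m, n be positive integers, let A be a real p×(mn) matrix, f ∈ ℝ^p, λ > 0, ε > 0, M ≥ 0, and suppose ker(A) ∩ ker(∇) = {0}. Then for all ρ₂ sufficiently large (depending on λ, A, ∇, M, ε, m, n) there exist constants c₁ > 0 and c₂ > 0 with the following property. Suppose u, u⁺ ∈ ℝ^{m×n}, h, h⁺ ∈ ℝ^{m×n} × ℝ^{m×n}, and dual variables b, b⁺ satisfy: (i) u⁺ is a global minimizer of v ↦ L(v, h; b); (ii) h⁺ is a global minimizer of g ↦ L(u⁺, g; b) over g ≠ 0; (iii) b⁺ = b + ∇u⁺ − h⁺; (iv) ‖h‖₂ ≥ ε and ‖h⁺‖₂ ≥ ε; (v) ‖∇u‖₁ ≤ M and ‖∇u⁺‖₁ ≤ M; (vi) b = −(‖∇u‖₁/ρ₂)·h/‖h‖₂³. Then L(u⁺, h⁺; b⁺) ≤ L(u, h; b) − c₁‖u⁺ − u‖₂² − c₂‖h⁺ − h‖₂². -/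
/-!
The three ADMM updates are compared with the previous iterate one at a time.

The `u`-update minimizes `φ(u)/‖h‖` with `φ` convex plus a quadratic whose Hessian
`λAᵀA + ρ₂∇ᵀ∇` is coercive because `ker A ∩ ker ∇ = 0`, so the midpoint inequality makes `L`
drop by a multiple of `‖u⁺ - u‖²`.

The `h`-update makes `L` drop by `(ρ₂/2)‖h⁺ - h‖²` minus the curvature of `g ↦ φ(u⁺)/‖g‖`,
which is at most `M/(2ε³)` on `‖g‖ ≥ ε`; here one uses the first-order condition
`h⁺ - ∇u⁺ = b + φ(u⁺) h⁺/(ρ₂‖h⁺‖³)`.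

The dual update raises `L` by `ρ₂‖∇u⁺ - h⁺‖²`. By that first-order condition and its
counterpart (vi) from the previous step, `ρ₂(h⁺ - ∇u⁺)` is the increment of `(c, x) ↦ c x/‖x‖³`
between `(φ(u), h)` and `(φ(u⁺), h⁺)`, which is Lipschitz on `‖x‖ ≥ ε`, `c ≤ M`; since `φ` is
Lipschitz too, the rise is `O((‖h⁺ - h‖² + ‖u⁺ - u‖²)/ρ₂)` and is absorbed once `ρ₂` is large.
-/

open Finset Filter

noncomputable def gradX (m n : ℕ) (u : Fin m → Fin n → ℝ) : Fin m → Fin n → ℝ :=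
  fun i j => if h : (i : ℕ) + 1 < m then u ⟨(i : ℕ) + 1, h⟩ j - u i j else 0

noncomputable def gradY (m n : ℕ) (u : Fin m → Fin n → ℝ) : Fin m → Fin n → ℝ :=
  fun i j => if h : (j : ℕ) + 1 < n then u i ⟨(j : ℕ) + 1, h⟩ - u i j else 0

/-- The discrete forward-difference gradient operator `∇`. -/
noncomputable def grad (m n : ℕ) (u : Fin m → Fin n → ℝ) :
    (Fin m → Fin n → ℝ) × (Fin m → Fin n → ℝ) :=
  (gradX m n u, gradY m n u)

/-- Squared Euclidean norm on `ℝ^{m×n}`. -/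
noncomputable def mnorm2sq (m n : ℕ) (u : Fin m → Fin n → ℝ) : ℝ :=
  ∑ i, ∑ j, (u i j) ^ 2

/-- Euclidean norm on `ℝ^{m×n}`. -/
noncomputable def mnorm2 (m n : ℕ) (u : Fin m → Fin n → ℝ) : ℝ :=
  Real.sqrt (mnorm2sq m n u)

/-- Euclidean inner product on `ℝ^{m×n}`. -/
noncomputable def minner (m n : ℕ) (u v : Fin m → Fin n → ℝ) : ℝ :=
  ∑ i, ∑ j, u i j * v i j

/-- Squared Euclidean norm on `ℝ^{m×n} × ℝ^{m×n}`. -/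
noncomputable def pnorm2sq (m n : ℕ)
    (h : (Fin m → Fin n → ℝ) × (Fin m → Fin n → ℝ)) : ℝ :=
  mnorm2sq m n h.1 + mnorm2sq m n h.2

/-- Euclidean norm on `ℝ^{m×n} × ℝ^{m×n}`. -/
noncomputable def pnorm2 (m n : ℕ)
    (h : (Fin m → Fin n → ℝ) × (Fin m → Fin n → ℝ)) : ℝ :=
  Real.sqrt (pnorm2sq m n h)

/-- Euclidean inner product on `ℝ^{m×n} × ℝ^{m×n}`. -/
noncomputable def pinner (m n : ℕ)
    (h g : (Fin m → Fin n → ℝ) × (Fin m → Fin n → ℝ)) : ℝ :=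
  minner m n h.1 g.1 + minner m n h.2 g.2

/-- `‖∇u‖₁`, the (anisotropic) ℓ¹ norm of the discrete gradient. -/
noncomputable def gradL1 (m n : ℕ) (u : Fin m → Fin n → ℝ) : ℝ :=
  ∑ i, ∑ j, (|gradX m n u i j| + |gradY m n u i j|)

/-- View `u ∈ ℝ^{m×n}` as a vector in `ℝ^{mn}`. -/
noncomputable def flatten (m n : ℕ) (u : Fin m → Fin n → ℝ) : Fin m × Fin n → ℝ :=
  fun ij => u ij.1 ij.2

/-- Squared Euclidean norm on `ℝ^p`. -/
noncomputable def vnorm2sq (p : ℕ) (v : Fin p → ℝ) : ℝ := ∑ k, (v k) ^ 2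

/-- The augmented Lagrangian of the unconstrained `L₁/L₂` model:
`L(u, h; b) = ‖∇u‖₁/‖h‖₂ + (λ/2)‖Au − f‖₂² + ρ₂⟨b, ∇u − h⟩ + (ρ₂/2)‖h − ∇u‖₂²`. -/
noncomputable def augL (m n p : ℕ) (A : Matrix (Fin p) (Fin m × Fin n) ℝ) (f : Fin p → ℝ)
    (lam ρ₂ : ℝ) (u : Fin m → Fin n → ℝ)
    (h b : (Fin m → Fin n → ℝ) × (Fin m → Fin n → ℝ)) : ℝ :=
  gradL1 m n u / pnorm2 m n h
    + lam / 2 * vnorm2sq p (A.mulVec (flatten m n u) - f)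
    + ρ₂ * pinner m n b (grad m n u - h)
    + ρ₂ / 2 * pnorm2sq m n (h - grad m n u)

/-- Adjoint of `gradX` with respect to the Euclidean inner products. -/
noncomputable def gradTX (m n : ℕ) (q : Fin m → Fin n → ℝ) : Fin m → Fin n → ℝ :=
  fun i j =>
    (if 0 < (i : ℕ) then
        q ⟨(i : ℕ) - 1, Nat.lt_of_le_of_lt (Nat.sub_le _ _) i.isLt⟩ j
      else 0)
      - (if (i : ℕ) + 1 < m then q i j else 0)

/-- Adjoint of `gradY` with respect to the Euclidean inner products. -/
noncomputable def gradTY (m n : ℕ) (q : Fin m → Fin n → ℝ) : Fin m → Fin n → ℝ :=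
  fun i j =>
    (if 0 < (j : ℕ) then
        q i ⟨(j : ℕ) - 1, Nat.lt_of_le_of_lt (Nat.sub_le _ _) j.isLt⟩
      else 0)
      - (if (j : ℕ) + 1 < n then q i j else 0)

/-- `∇ᵀ`, the adjoint of the discrete gradient operator. -/
noncomputable def gradAdj (m n : ℕ)
    (h : (Fin m → Fin n → ℝ) × (Fin m → Fin n → ℝ)) : Fin m → Fin n → ℝ :=
  fun i j => gradTX m n h.1 i j + gradTY m n h.2 i j

open scoped RealInnerProductSpace ENNReal NNReal

section NormedSpace

variable {E V W : Type*} [NormedAddCommGroup E] [NormedSpace ℝ E] [FiniteDimensional ℝ E]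
  [NormedAddCommGroup V] [NormedSpace ℝ V] [NormedAddCommGroup W] [NormedSpace ℝ W]

lemma exists_pos_mul_norm_sq_le (A : E →ₗ[ℝ] V) (D : E →ₗ[ℝ] W)
    (hker : ∀ v, A v = 0 → D v = 0 → v = 0) :
    ∃ α > 0, ∀ v, α * ‖v‖ ^ 2 ≤ ‖A v‖ ^ 2 + ‖D v‖ ^ 2 := by
  have hinj : LinearMap.ker (A.prod D) = ⊥ :=
    LinearMap.ker_eq_bot'.mpr fun v hv => hker v (congrArg Prod.fst hv) (congrArg Prod.snd hv)
  obtain ⟨K, hK, hanti⟩ := (A.prod D).exists_antilipschitzWith hinj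
  refine ⟨((K : ℝ) ^ 2)⁻¹, by positivity, fun v => ?_⟩
  have hv : ‖v‖ ≤ K * max ‖A v‖ ‖D v‖ := by
    simpa [Prod.dist_eq, dist_zero_right] using hanti.le_mul_dist v 0
  have hmax : max ‖A v‖ ‖D v‖ ^ 2 ≤ ‖A v‖ ^ 2 + ‖D v‖ ^ 2 := by
    rcases max_choice ‖A v‖ ‖D v‖ with h | h <;> rw [h] <;>
      nlinarith [sq_nonneg ‖A v‖, sq_nonneg ‖D v‖]
  have hsq : ‖v‖ ^ 2 ≤ K ^ 2 * max ‖A v‖ ‖D v‖ ^ 2 := by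
    rw [← mul_pow]; exact pow_le_pow_left₀ (norm_nonneg v) hv 2
  rw [inv_mul_le_iff₀ (by positivity)]
  nlinarith

lemma exists_lipschitzWith_norm_comp (T : E →ₗ[ℝ] V) : ∃ K, LipschitzWith K (fun e => ‖T e‖) :=
  ⟨_, lipschitzWith_one_norm.comp (LinearMap.toContinuousLinearMap T).lipschitz⟩

end NormedSpace

lemma abs_inv_pow_three_sub_mul_le {ε a s : ℝ} (hε : 0 < ε) (ha : ε ≤ a) (hs : ε ≤ s) :
    |(a ^ 3)⁻¹ - (s ^ 3)⁻¹| * s ≤ 3 / ε ^ 3 * |a - s| := by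
  have ha0 : 0 < a := hε.trans_le ha
  have hs0 : 0 < s := hε.trans_le hs
  have hfactor : ((a ^ 3)⁻¹ - (s ^ 3)⁻¹) * s
      = (s - a) * ((a ^ 3)⁻¹ + (a ^ 2 * s)⁻¹ + (a * s ^ 2)⁻¹) := by
    field_simp; ring
  have hbound : (a ^ 3)⁻¹ + (a ^ 2 * s)⁻¹ + (a * s ^ 2)⁻¹ ≤ 3 / ε ^ 3 := by
    have h1 : (a ^ 3)⁻¹ ≤ (ε ^ 3)⁻¹ := by gcongr
    have h2 : (a ^ 2 * s)⁻¹ ≤ (ε ^ 3)⁻¹ := by rw [show ε ^ 3 = ε ^ 2 * ε by ring]; gcongr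
    have h3 : (a * s ^ 2)⁻¹ ≤ (ε ^ 3)⁻¹ := by rw [show ε ^ 3 = ε * ε ^ 2 by ring]; gcongr
    linarith [div_eq_mul_inv 3 (ε ^ 3)]
  rw [← abs_of_pos hs0, ← abs_mul, abs_of_pos hs0, hfactor, abs_mul, abs_sub_comm,
    abs_of_pos (by positivity : 0 < (a ^ 3)⁻¹ + (a ^ 2 * s)⁻¹ + (a * s ^ 2)⁻¹), mul_comm]
  exact mul_le_mul_of_nonneg_right hbound (abs_nonneg _)

section InnerProductSpace

variable {F : Type*} [NormedAddCommGroup F] [InnerProductSpace ℝ F]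

lemma norm_midpoint_sub_sq (x y z : F) :
    ‖(2⁻¹ : ℝ) • (x + y) - z‖ ^ 2 = (‖x - z‖ ^ 2 + ‖y - z‖ ^ 2) / 2 - ‖x - y‖ ^ 2 / 4 := by
  have hpar := parallelogram_law_with_norm ℝ (x - z) (y - z)
  have hmid : (2⁻¹ : ℝ) • (x + y) - z = (2⁻¹ : ℝ) • ((x - z) + (y - z)) := by module
  rw [sub_sub_sub_cancel_right] at hpar
  rw [hmid, norm_smul, mul_pow]
  norm_num
  linarith

lemma hasFDerivAt_inv_norm {x : F} (hx : x ≠ 0) :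
    HasFDerivAt (fun g : F => ‖g‖⁻¹) (-(‖x‖ ^ 3)⁻¹ • innerSL ℝ x) x := by
  have hnorm := (hasStrictFDerivAt_norm_sq x).hasFDerivAt.sqrt (by positivity)
  simp only [Real.sqrt_sq (norm_nonneg _)] at hnorm
  refine ((hasFDerivAt_inv (norm_ne_zero_iff.mpr hx)).comp x hnorm).congr_fderiv ?_
  ext v
  have : ‖x‖ ≠ 0 := norm_ne_zero_iff.mpr hx
  simp only [one_div, mul_inv_rev, ContinuousLinearMap.comp_smulₛₗ, Real.ringHom_apply,
    ContinuousLinearMap.comp_smul, smul_apply, ContinuousLinearMap.comp_apply, coe_innerSL_apply,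
    ContinuousLinearMap.toSpanSingleton_apply, smul_eq_mul, mul_neg, smul_neg, nsmul_eq_mul,
    Nat.cast_ofNat, neg_smul, neg_apply, neg_inj]
  field_simp

lemma inv_norm_sub_le_inv_norm {x y : F} (hx : x ≠ 0) (hy : y ≠ 0) :
    ‖x‖⁻¹ - ⟪x, y - x⟫ / ‖x‖ ^ 3 - ‖y - x‖ ^ 2 / (2 * ‖x‖ ^ 3) ≤ ‖y‖⁻¹ := by
  have ha : 0 < ‖x‖ := norm_pos_iff.mpr hx
  have hs : 0 < ‖y‖ := norm_pos_iff.mpr hy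
  rw [inner_sub_right, real_inner_self_eq_norm_sq, norm_sub_sq_real, real_inner_comm x y,
    ← sub_nonneg]
  have hgap : ‖y‖⁻¹ - (‖x‖⁻¹ - (⟪x, y⟫ - ‖x‖ ^ 2) / ‖x‖ ^ 3
      - (‖y‖ ^ 2 - 2 * ⟪x, y⟫ + ‖x‖ ^ 2) / (2 * ‖x‖ ^ 3))
      = (‖x‖ - ‖y‖) ^ 2 * (2 * ‖x‖ + ‖y‖) / (2 * ‖x‖ ^ 3 * ‖y‖) := by
    field_simp; ring
  rw [hgap]; positivity

lemma norm_inv_norm_pow_three_smul_sub_le {ε : ℝ} (hε : 0 < ε) {x y : F} (hx : ε ≤ ‖x‖)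
    (hy : ε ≤ ‖y‖) : ‖(‖x‖ ^ 3)⁻¹ • x - (‖y‖ ^ 3)⁻¹ • y‖ ≤ 4 / ε ^ 3 * ‖x - y‖ := by
  have hsplit : (‖x‖ ^ 3)⁻¹ • x - (‖y‖ ^ 3)⁻¹ • y
      = (‖x‖ ^ 3)⁻¹ • (x - y) + ((‖x‖ ^ 3)⁻¹ - (‖y‖ ^ 3)⁻¹) • y := by module
  have h1 : ‖(‖x‖ ^ 3)⁻¹ • (x - y)‖ ≤ 1 / ε ^ 3 * ‖x - y‖ := by
    rw [norm_smul, norm_inv, norm_pow, norm_norm, one_div]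
    gcongr
  have h2 : ‖((‖x‖ ^ 3)⁻¹ - (‖y‖ ^ 3)⁻¹) • y‖ ≤ 3 / ε ^ 3 * ‖x - y‖ := by
    rw [norm_smul, Real.norm_eq_abs]
    exact (abs_inv_pow_three_sub_mul_le hε hx hy).trans
      (by gcongr; exact abs_norm_sub_norm_le x y)
  calc _ ≤ _ := hsplit ▸ norm_add_le _ _
    _ ≤ _ := add_le_add h1 h2
    _ = 4 / ε ^ 3 * ‖x - y‖ := by ring

lemma norm_div_pow_three_smul_sub_le {ε M c c' : ℝ} (hε : 0 < ε) {x y : F} (hx : ε ≤ ‖x‖)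
    (hy : ε ≤ ‖y‖) (hc : 0 ≤ c) (hcM : c ≤ M) :
    ‖(c / ‖x‖ ^ 3) • x - (c' / ‖y‖ ^ 3) • y‖ ≤ 4 * M / ε ^ 3 * ‖x - y‖ + |c - c'| / ε ^ 2 := by
  have hy0 : 0 < ‖y‖ := hε.trans_le hy
  have hsplit : (c / ‖x‖ ^ 3) • x - (c' / ‖y‖ ^ 3) • y
      = c • ((‖x‖ ^ 3)⁻¹ • x - (‖y‖ ^ 3)⁻¹ • y) + ((c - c') / ‖y‖ ^ 3) • y := by module
  have h1 : ‖c • ((‖x‖ ^ 3)⁻¹ • x - (‖y‖ ^ 3)⁻¹ • y)‖ ≤ 4 * M / ε ^ 3 * ‖x - y‖ := by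
    rw [norm_smul, Real.norm_of_nonneg hc]
    calc _ ≤ M * (4 / ε ^ 3 * ‖x - y‖) :=
          mul_le_mul hcM (norm_inv_norm_pow_three_smul_sub_le hε hx hy) (norm_nonneg _)
            (hc.trans hcM)
      _ = _ := by ring
  have h2 : ‖((c - c') / ‖y‖ ^ 3) • y‖ ≤ |c - c'| / ε ^ 2 := by
    rw [norm_smul, Real.norm_eq_abs, abs_div, abs_of_pos (by positivity : 0 < ‖y‖ ^ 3),
      show ‖y‖ ^ 3 = ‖y‖ ^ 2 * ‖y‖ by ring, div_mul_eq_div_div, div_mul_cancel₀ _ hy0.ne']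
    gcongr
  exact hsplit ▸ (norm_add_le _ _).trans (add_le_add h1 h2)

end InnerProductSpace

section AugmentedLagrangian

variable {E F G : Type*} [NormedAddCommGroup E] [NormedSpace ℝ E]
  [NormedAddCommGroup F] [InnerProductSpace ℝ F] [NormedAddCommGroup G] [InnerProductSpace ℝ G]

variable (φ : E → ℝ) (A : E →ₗ[ℝ] G) (D : E →ₗ[ℝ] F) (f : G) (lam ρ : ℝ)

noncomputable def augLagrangian (u : E) (h b : F) : ℝ :=
  φ u / ‖h‖ + lam / 2 * ‖A u - f‖ ^ 2 + ρ * ⟪b, D u - h⟫ + ρ / 2 * ‖h - D u‖ ^ 2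

variable {φ A D f lam ρ}

lemma augLagrangian_midpoint_le (hφ : ConvexOn ℝ Set.univ φ) (u v : E) (h b : F) :
    augLagrangian φ A D f lam ρ ((2⁻¹ : ℝ) • (u + v)) h b
      ≤ (augLagrangian φ A D f lam ρ u h b + augLagrangian φ A D f lam ρ v h b) / 2
        - (lam * ‖A (v - u)‖ ^ 2 + ρ * ‖D (v - u)‖ ^ 2) / 8 := by
  have hφmid : φ ((2⁻¹ : ℝ) • (u + v)) / ‖h‖ ≤ (φ u / ‖h‖ + φ v / ‖h‖) / 2 := by
    have := hφ.2 (Set.mem_univ u) (Set.mem_univ v) (by norm_num : (0 : ℝ) ≤ 2⁻¹)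
      (by norm_num : (0 : ℝ) ≤ 2⁻¹) (by norm_num)
    rw [← smul_add, smul_eq_mul, smul_eq_mul] at this
    calc _ ≤ (2⁻¹ * φ u + 2⁻¹ * φ v) / ‖h‖ := div_le_div_of_nonneg_right this (norm_nonneg h)
      _ = _ := by ring
  have hA : ‖A (v - u)‖ = ‖A u - A v‖ := by rw [map_sub, norm_sub_rev]
  have hD : ‖D (v - u)‖ = ‖D u - D v‖ := by rw [map_sub, norm_sub_rev]
  simp only [augLagrangian, norm_sub_rev h, map_smul, map_add, norm_midpoint_sub_sq, hA, hD,
    inner_sub_right, inner_smul_right, inner_add_right]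
  linarith

lemma augLagrangian_u_step_descent (hφ : ConvexOn ℝ Set.univ φ) {uP : E} {h b : F}
    (hmin : ∀ v, augLagrangian φ A D f lam ρ uP h b ≤ augLagrangian φ A D f lam ρ v h b) (u : E) :
    (lam * ‖A (uP - u)‖ ^ 2 + ρ * ‖D (uP - u)‖ ^ 2) / 4
      ≤ augLagrangian φ A D f lam ρ u h b - augLagrangian φ A D f lam ρ uP h b := by
  linarith [augLagrangian_midpoint_le (A := A) (D := D) (f := f) (lam := lam) (ρ := ρ) hφ u uP h b,
    hmin ((2⁻¹ : ℝ) • (u + uP))]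

lemma augLagrangian_h_step_stationary (hρ : ρ ≠ 0) {uP : E} {hP b : F} (hhP : hP ≠ 0)
    (hmin : ∀ g, g ≠ 0 → augLagrangian φ A D f lam ρ uP hP b ≤ augLagrangian φ A D f lam ρ uP g b) :
    hP - D uP = b + (φ uP / (ρ * ‖hP‖ ^ 3)) • hP := by
  set z := hP - D uP - (b + (φ uP / (ρ * ‖hP‖ ^ 3)) • hP)
  have hloc : IsLocalMin (fun g => augLagrangian φ A D f lam ρ uP g b) hP :=
    (eventually_ne_nhds hhP).mono hmin
  have hderiv : HasFDerivAt (fun g => augLagrangian φ A D f lam ρ uP g b)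
      (ρ • innerSL ℝ z) hP := by
    have t1 := (hasFDerivAt_inv_norm hhP).const_mul (φ uP)
    have t2 :=
      ((innerSL ℝ b).hasFDerivAt.comp hP ((hasFDerivAt_id hP).const_sub (D uP))).const_mul ρ
    have t3 := ((hasFDerivAt_id hP).sub_const (D uP)).norm_sq.const_mul (ρ / 2)
    have hfun : (fun g => augLagrangian φ A D f lam ρ uP g b) = fun g =>
        φ uP * ‖g‖⁻¹ + lam / 2 * ‖A uP - f‖ ^ 2 + ρ * ⟪b, D uP - g⟫ + ρ / 2 * ‖g - D uP‖ ^ 2 := by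
      funext g; simp only [augLagrangian, div_eq_mul_inv, norm_sub_rev g]
    rw [hfun]
    refine (((t1.add_const _).add t2).add t3).congr_fderiv ?_
    ext v
    have : ‖hP‖ ≠ 0 := norm_ne_zero_iff.mpr hhP
    simp only [neg_smul, smul_neg, ContinuousLinearMap.comp_neg, ContinuousLinearMap.comp_id,
      id_eq, map_sub, add_apply, neg_apply,
      smul_apply, coe_innerSL_apply, smul_eq_mul,
      sub_apply, nsmul_eq_mul, Nat.cast_ofNat, map_add, map_smul, z]
    field_simp
    ring
  have hz : ρ * ⟪z, z⟫ = 0 := by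
    simpa using congrArg (fun L => L z) (hloc.hasFDerivAt_eq_zero hderiv)
  have hz0 : z = 0 := inner_self_eq_zero.mp ((mul_eq_zero.mp hz).resolve_left hρ)
  exact sub_eq_zero.mp hz0

lemma augLagrangian_h_step_descent (hρ : ρ ≠ 0) {uP : E} {h hP b : F} (hh : h ≠ 0)
    (hhP : hP ≠ 0) (hφ : 0 ≤ φ uP) (hstat : hP - D uP = b + (φ uP / (ρ * ‖hP‖ ^ 3)) • hP) :
    (ρ / 2 - φ uP / (2 * ‖hP‖ ^ 3)) * ‖hP - h‖ ^ 2
      ≤ augLagrangian φ A D f lam ρ uP h b - augLagrangian φ A D f lam ρ uP hP b := by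
  have hlin : ρ * ⟪b, D uP - h⟫ = ρ * ⟪b, D uP - hP⟫ - ρ * ⟪b, h - hP⟫ := by
    rw [← mul_sub, ← inner_sub_right, sub_sub_sub_cancel_right]
  have hsq : ρ / 2 * ‖h - D uP‖ ^ 2
      = ρ / 2 * ‖hP - D uP‖ ^ 2 + ρ * ⟪hP - D uP, h - hP⟫ + ρ / 2 * ‖h - hP‖ ^ 2 := by
    rw [← sub_add_sub_cancel' hP, norm_add_sq_real]
    ring
  have hinner : ρ * ⟪hP - D uP, h - hP⟫
      = ρ * ⟪b, h - hP⟫ + φ uP / ‖hP‖ ^ 3 * ⟪hP, h - hP⟫ := by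
    have : ‖hP‖ ≠ 0 := norm_ne_zero_iff.mpr hhP
    rw [hstat, inner_add_left, real_inner_smul_left]
    field_simp
  have htangent := mul_le_mul_of_nonneg_left (inv_norm_sub_le_inv_norm hhP hh) hφ
  simp only [augLagrangian, norm_sub_rev hP h, div_eq_mul_inv] at *
  linarith

lemma augLagrangian_dual_step_eq {u : E} {h b bP : F} (hbP : bP = b + D u - h) :
    augLagrangian φ A D f lam ρ u h bP
      = augLagrangian φ A D f lam ρ u h b + ρ * ‖D u - h‖ ^ 2 := by
  rw [hbP, add_sub_assoc]
  simp only [augLagrangian, inner_add_left, real_inner_self_eq_norm_sq]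
  ring

lemma augLagrangian_dual_step_le (hρ : 0 < ρ) (hφ0 : ∀ x, 0 ≤ φ x) {K : ℝ≥0}
    (hφK : LipschitzWith K φ) {ε M : ℝ} (hε : 0 < ε) {u uP : E} {h hP b bP : F}
    (hstat : hP - D uP = b + (φ uP / (ρ * ‖hP‖ ^ 3)) • hP) (hbP : bP = b + D uP - hP)
    (hεh : ε ≤ ‖h‖) (hεhP : ε ≤ ‖hP‖) (hMuP : φ uP ≤ M) (hb : b = -(φ u / (ρ * ‖h‖ ^ 3)) • h) :
    augLagrangian φ A D f lam ρ uP hP bP - augLagrangian φ A D f lam ρ uP hP b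
      ≤ 2 * ((4 * M / ε ^ 3) ^ 2 * ‖hP - h‖ ^ 2 + (K / ε ^ 2) ^ 2 * ‖uP - u‖ ^ 2) / ρ := by
  set X := ‖(φ uP / ‖hP‖ ^ 3) • hP - (φ u / ‖h‖ ^ 3) • h‖
  have hres : D uP - hP = -ρ⁻¹ • ((φ uP / ‖hP‖ ^ 3) • hP - (φ u / ‖h‖ ^ 3) • h) := by
    rw [← neg_sub, hstat, hb]
    module
  have hlip : |φ uP - φ u| ≤ K * ‖uP - u‖ := by
    simpa [Real.dist_eq, dist_eq_norm] using hφK.dist_le_mul uP u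
  have hX : X ≤ 4 * M / ε ^ 3 * ‖hP - h‖ + K / ε ^ 2 * ‖uP - u‖ := by
    have : |φ uP - φ u| / ε ^ 2 ≤ K / ε ^ 2 * ‖uP - u‖ := by
      rw [div_mul_eq_mul_div]; gcongr
    linarith [norm_div_pow_three_smul_sub_le hε hεhP hεh (hφ0 uP) hMuP (c' := φ u)]
  have hX2 : X ^ 2 ≤ 2 * ((4 * M / ε ^ 3) ^ 2 * ‖hP - h‖ ^ 2 + (K / ε ^ 2) ^ 2 * ‖uP - u‖ ^ 2) := by
    nlinarith [norm_nonneg ((φ uP / ‖hP‖ ^ 3) • hP - (φ u / ‖h‖ ^ 3) • h),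
      sq_nonneg (4 * M / ε ^ 3 * ‖hP - h‖ - K / ε ^ 2 * ‖uP - u‖)]
  rw [augLagrangian_dual_step_eq hbP, hres, norm_smul, norm_neg, norm_inv,
    Real.norm_of_nonneg hρ.le]
  calc _ = X ^ 2 / ρ := by field_simp; ring
    _ ≤ _ := by gcongr

theorem augLagrangian_sufficient_descent (hφc : ConvexOn ℝ Set.univ φ) (hφ0 : ∀ x, 0 ≤ φ x)
    {K : ℝ≥0} (hφK : LipschitzWith K φ) {α ε M : ℝ} (hα : 0 < α)
    (hcoer : ∀ v, α * ‖v‖ ^ 2 ≤ ‖A v‖ ^ 2 + ‖D v‖ ^ 2) (hlam : 0 < lam) (hε : 0 < ε)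
    (hρ : lam + 16 * M / ε ^ 3 + 16 * K ^ 2 / (lam * α * ε ^ 4) ≤ ρ) {u uP : E}
    {h hP b bP : F}
    (hu : ∀ v, augLagrangian φ A D f lam ρ uP h b ≤ augLagrangian φ A D f lam ρ v h b)
    (hhP : hP ≠ 0)
    (hh : ∀ g, g ≠ 0 → augLagrangian φ A D f lam ρ uP hP b ≤ augLagrangian φ A D f lam ρ uP g b)
    (hbP : bP = b + D uP - hP) (hεh : ε ≤ ‖h‖) (hεhP : ε ≤ ‖hP‖) (hMuP : φ uP ≤ M)
    (hb : b = -(φ u / (ρ * ‖h‖ ^ 3)) • h) :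
    augLagrangian φ A D f lam ρ uP hP bP ≤ augLagrangian φ A D f lam ρ u h b
      - lam * α / 8 * ‖uP - u‖ ^ 2 - ρ / 4 * ‖hP - h‖ ^ 2 := by
  have hM : 0 ≤ M := (hφ0 uP).trans hMuP
  have hMterm : 0 ≤ 16 * M / ε ^ 3 := by positivity
  have hKterm : 0 ≤ 16 * K ^ 2 / (lam * α * ε ^ 4) := by positivity
  have hρM : 16 * M / ε ^ 3 ≤ ρ := by linarith
  have hρK : 16 * K ^ 2 / (lam * α * ε ^ 4) ≤ ρ := by linarith
  have hlamρ : lam ≤ ρ := by linarith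
  have hρ0 : 0 < ρ := hlam.trans_le hlamρ
  have hh0 : h ≠ 0 := norm_pos_iff.mp (hε.trans_le hεh)
  have hstat := augLagrangian_h_step_stationary hρ0.ne' hhP hh
  have hstep_u : lam * α / 4 * ‖uP - u‖ ^ 2
      ≤ augLagrangian φ A D f lam ρ u h b - augLagrangian φ A D f lam ρ uP h b := by
    have := augLagrangian_u_step_descent hφc hu u
    have := mul_le_mul_of_nonneg_left (hcoer (uP - u)) hlam.le
    nlinarith [sq_nonneg ‖D (uP - u)‖]
  have hstep_h : 3 * ρ / 8 * ‖hP - h‖ ^ 2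
      ≤ augLagrangian φ A D f lam ρ uP h b - augLagrangian φ A D f lam ρ uP hP b := by
    refine le_trans ?_ (augLagrangian_h_step_descent hρ0.ne' hh0 hhP (hφ0 uP) hstat)
    have : φ uP / (2 * ‖hP‖ ^ 3) ≤ M / (2 * ε ^ 3) := by gcongr
    gcongr
    linarith [show M / (2 * ε ^ 3) = 16 * M / ε ^ 3 / 32 by ring]
  have hstep_b : augLagrangian φ A D f lam ρ uP hP bP - augLagrangian φ A D f lam ρ uP hP b
      ≤ ρ / 8 * ‖hP - h‖ ^ 2 + lam * α / 8 * ‖uP - u‖ ^ 2 := by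
    refine (augLagrangian_dual_step_le hρ0 hφ0 hφK hε hstat hbP hεh hεhP hMuP hb).trans ?_
    have hM2 : 2 * (4 * M / ε ^ 3) ^ 2 ≤ ρ ^ 2 / 8 :=
      calc _ = (16 * M / ε ^ 3) ^ 2 / 8 := by ring
        _ ≤ ρ ^ 2 / 8 := by gcongr
    have hK2 : 2 * (K / ε ^ 2 : ℝ) ^ 2 ≤ ρ * (lam * α) / 8 :=
      calc _ = 16 * K ^ 2 / (lam * α * ε ^ 4) * (lam * α) / 8 := by field_simp; ring
        _ ≤ ρ * (lam * α) / 8 := by gcongr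
    rw [div_le_iff₀ hρ0]
    nlinarith [mul_le_mul_of_nonneg_right hM2 (sq_nonneg ‖hP - h‖),
      mul_le_mul_of_nonneg_right hK2 (sq_nonneg ‖uP - u‖)]
  linarith

end AugmentedLagrangian

section Grid

variable {m n : ℕ}

/- Mathlib puts the sup norm on `Fin m → Fin n → ℝ`; `gridLp q` and `fieldLp q` identify the grid
spaces with `ℓ^q` spaces, so that for `q = 2` the paper's Euclidean structure is Mathlib's and
for `q = 1` the norm of the gradient is `gradL1`. -/
noncomputable def gridLp (q : ℝ≥0∞) (m n : ℕ) :
    (Fin m → Fin n → ℝ) ≃ₗ[ℝ] PiLp q (fun _ : Fin m × Fin n => ℝ) :=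
  (LinearEquiv.curry ℝ ℝ (Fin m) (Fin n)).symm.trans (WithLp.linearEquiv q ℝ _).symm

noncomputable def fieldLp (q : ℝ≥0∞) (m n : ℕ) :
    ((Fin m → Fin n → ℝ) × (Fin m → Fin n → ℝ)) ≃ₗ[ℝ]
      WithLp q (PiLp q (fun _ : Fin m × Fin n => ℝ) × PiLp q (fun _ : Fin m × Fin n => ℝ)) :=
  ((gridLp q m n).prodCongr (gridLp q m n)).trans (WithLp.linearEquiv q ℝ _).symm

lemma gridLp_apply (q : ℝ≥0∞) (u : Fin m → Fin n → ℝ) (ij : Fin m × Fin n) :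
    gridLp q m n u ij = u ij.1 ij.2 := rfl

lemma fieldLp_apply (q : ℝ≥0∞) (h : (Fin m → Fin n → ℝ) × (Fin m → Fin n → ℝ)) :
    fieldLp q m n h = WithLp.toLp q (gridLp q m n h.1, gridLp q m n h.2) := rfl

lemma mnorm2sq_eq_norm_sq (u : Fin m → Fin n → ℝ) : mnorm2sq m n u = ‖gridLp 2 m n u‖ ^ 2 := by
  simp [EuclideanSpace.norm_sq_eq, mnorm2sq, gridLp_apply, Fintype.sum_prod_type]

lemma minner_eq_inner (u v : Fin m → Fin n → ℝ) :
    minner m n u v = ⟪gridLp 2 m n u, gridLp 2 m n v⟫ := by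
  simp [PiLp.inner_apply, minner, gridLp_apply, Fintype.sum_prod_type, mul_comm]

lemma pnorm2sq_eq_norm_sq (h : (Fin m → Fin n → ℝ) × (Fin m → Fin n → ℝ)) :
    pnorm2sq m n h = ‖fieldLp 2 m n h‖ ^ 2 := by
  rw [WithLp.prod_norm_sq_eq_of_L2, pnorm2sq, mnorm2sq_eq_norm_sq, mnorm2sq_eq_norm_sq]; rfl

lemma pnorm2_eq_norm (h : (Fin m → Fin n → ℝ) × (Fin m → Fin n → ℝ)) :
    pnorm2 m n h = ‖fieldLp 2 m n h‖ := by
  rw [pnorm2, pnorm2sq_eq_norm_sq, Real.sqrt_sq (norm_nonneg _)]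

lemma pinner_eq_inner (h g : (Fin m → Fin n → ℝ) × (Fin m → Fin n → ℝ)) :
    pinner m n h g = ⟪fieldLp 2 m n h, fieldLp 2 m n g⟫ := by
  rw [WithLp.prod_inner_apply, pinner, minner_eq_inner, minner_eq_inner]; rfl

lemma gradL1_eq_norm (u : Fin m → Fin n → ℝ) : gradL1 m n u = ‖fieldLp 1 m n (grad m n u)‖ := by
  simp [WithLp.prod_norm_eq_of_L1, PiLp.norm_eq_of_L1, gradL1, fieldLp_apply, gridLp_apply,
    Fintype.sum_prod_type, grad, Finset.sum_add_distrib]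

lemma vnorm2sq_eq_norm_sq {p : ℕ} (v : Fin p → ℝ) :
    vnorm2sq p v = ‖(WithLp.toLp 2 v : EuclideanSpace ℝ (Fin p))‖ ^ 2 := by
  simp [EuclideanSpace.norm_sq_eq, vnorm2sq]


variable (m n) in
noncomputable def gradLinearMap :
    (Fin m → Fin n → ℝ) →ₗ[ℝ] (Fin m → Fin n → ℝ) × (Fin m → Fin n → ℝ) where
  toFun := grad m n
  map_add' u v := by
    ext i j <;> simp only [grad, gradX, gradY, Prod.fst_add, Prod.snd_add, Pi.add_apply] <;>
      split_ifs <;> ring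
  map_smul' c u := by
    ext i j <;> simp only [grad, gradX, gradY, Prod.smul_fst, Prod.smul_snd, Pi.smul_apply,
      smul_eq_mul, RingHom.id_apply] <;> split_ifs <;> ring

variable (m n) in
noncomputable def gradLp (q : ℝ≥0∞) :
    EuclideanSpace ℝ (Fin m × Fin n) →ₗ[ℝ]
      WithLp q (PiLp q (fun _ : Fin m × Fin n => ℝ) × PiLp q (fun _ : Fin m × Fin n => ℝ)) :=
  (fieldLp q m n).toLinearMap ∘ₗ gradLinearMap m n ∘ₗ (gridLp 2 m n).symm.toLinearMap

lemma gradLp_gridLp (q : ℝ≥0∞) (u : Fin m → Fin n → ℝ) :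
    gradLp m n q (gridLp 2 m n u) = fieldLp q m n (grad m n u) := by
  simp [gradLp, gradLinearMap]

lemma toEuclideanLin_gridLp {p : ℕ} (A : Matrix (Fin p) (Fin m × Fin n) ℝ)
    (u : Fin m → Fin n → ℝ) :
    Matrix.toEuclideanLin A (gridLp 2 m n u) = WithLp.toLp 2 (A.mulVec (flatten m n u)) := rfl

lemma augL_eq_augLagrangian {p : ℕ} (A : Matrix (Fin p) (Fin m × Fin n) ℝ) (f : Fin p → ℝ)
    (lam ρ : ℝ) (u : Fin m → Fin n → ℝ) (h b : (Fin m → Fin n → ℝ) × (Fin m → Fin n → ℝ)) :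
    augL m n p A f lam ρ u h b
      = augLagrangian (fun e => ‖gradLp m n 1 e‖) (Matrix.toEuclideanLin A) (gradLp m n 2)
          (WithLp.toLp 2 f) lam ρ (gridLp 2 m n u) (fieldLp 2 m n h) (fieldLp 2 m n b) := by
  simp only [augL, augLagrangian, gradL1_eq_norm, pnorm2_eq_norm, vnorm2sq_eq_norm_sq,
    pinner_eq_inner, pnorm2sq_eq_norm_sq, gradLp_gridLp, map_sub, toEuclideanLin_gridLp,
    WithLp.toLp_sub]

end Grid

theorem stmt1_general (m n p : ℕ)
    (A : Matrix (Fin p) (Fin m × Fin n) ℝ) (f : Fin p → ℝ)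
    (lam ε M : ℝ) (hlam : 0 < lam) (hε : 0 < ε) (hM : 0 ≤ M)
    (hker : ∀ v : Fin m → Fin n → ℝ,
      A.mulVec (flatten m n v) = 0 → grad m n v = 0 → v = 0) :
    ∃ ρ₀ : ℝ, ∀ ρ₂ : ℝ, ρ₀ ≤ ρ₂ →
      ∃ c₁ c₂ : ℝ, 0 < c₁ ∧ 0 < c₂ ∧
        ∀ (u uP : Fin m → Fin n → ℝ)
          (h hP b bP : (Fin m → Fin n → ℝ) × (Fin m → Fin n → ℝ)),
          (∀ v, augL m n p A f lam ρ₂ uP h b ≤ augL m n p A f lam ρ₂ v h b) →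
          (hP ≠ 0 ∧ ∀ g, g ≠ 0 →
            augL m n p A f lam ρ₂ uP hP b ≤ augL m n p A f lam ρ₂ uP g b) →
          bP = b + grad m n uP - hP →
          ε ≤ pnorm2 m n h → ε ≤ pnorm2 m n hP →
          gradL1 m n u ≤ M → gradL1 m n uP ≤ M →
          b = (-(gradL1 m n u / (ρ₂ * (pnorm2 m n h) ^ 3))) • h →
          augL m n p A f lam ρ₂ uP hP bP ≤
            augL m n p A f lam ρ₂ u h b
              - c₁ * mnorm2sq m n (uP - u) - c₂ * pnorm2sq m n (hP - h) := by
  have hker' : ∀ v, Matrix.toEuclideanLin A v = 0 → gradLp m n 2 v = 0 → v = 0 := by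
    intro v hAv hDv
    obtain ⟨u, rfl⟩ := (gridLp 2 m n).surjective v
    rw [toEuclideanLin_gridLp, WithLp.toLp_eq_zero] at hAv
    rw [gradLp_gridLp, LinearEquiv.map_eq_zero_iff] at hDv
    rw [hker u hAv hDv, map_zero]
  obtain ⟨α, hα, hcoer⟩ := exists_pos_mul_norm_sq_le _ _ hker'
  obtain ⟨K, hφK⟩ := exists_lipschitzWith_norm_comp (gradLp m n 1)
  have hφc : ConvexOn ℝ Set.univ (fun e => ‖gradLp m n 1 e‖) :=
    (convexOn_norm convex_univ).comp_linearMap _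
  refine ⟨lam + 16 * M / ε ^ 3 + 16 * (K : ℝ) ^ 2 / (lam * α * ε ^ 4),
    fun ρ hρ => ⟨lam * α / 8, ρ / 4, by positivity, ?_, ?_⟩⟩
  · have : 0 ≤ 16 * M / ε ^ 3 := by positivity
    have : 0 ≤ 16 * (K : ℝ) ^ 2 / (lam * α * ε ^ 4) := by positivity
    linarith
  intro u uP h hP b bP hu ⟨hhP, hh⟩ hbP hεh hεhP _ hMuP hb
  simp only [augL_eq_augLagrangian, mnorm2sq_eq_norm_sq, pnorm2sq_eq_norm_sq, map_sub]
  refine augLagrangian_sufficient_descent hφc (fun _ => norm_nonneg _) hφK hα hcoer hlam hε hρ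
    (fun v => ?_) ((fieldLp 2 m n).map_ne_zero_iff.mpr hhP) (fun g hg => ?_) ?_
    (pnorm2_eq_norm h ▸ hεh) (pnorm2_eq_norm hP ▸ hεhP)
    (by rwa [gradLp_gridLp, ← gradL1_eq_norm]) ?_
  · simpa only [augL_eq_augLagrangian, LinearEquiv.apply_symm_apply] using
      hu ((gridLp 2 m n).symm v)
  · simpa only [augL_eq_augLagrangian, LinearEquiv.apply_symm_apply] using
      hh ((fieldLp 2 m n).symm g) ((LinearEquiv.map_ne_zero_iff _).mpr hg)
  · rw [hbP, map_sub, map_add, gradLp_gridLp]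
  · rw [hb, map_smul, gradL1_eq_norm, pnorm2_eq_norm, gradLp_gridLp]

/-- Paper's Lemma 4.2 (sufficient descent) for one ADMM step. -/
theorem stmt1 (m n p : ℕ) (hm : 0 < m) (hn : 0 < n)
    (A : Matrix (Fin p) (Fin m × Fin n) ℝ) (f : Fin p → ℝ)
    (lam ε M : ℝ) (hlam : 0 < lam) (hε : 0 < ε) (hM : 0 ≤ M)
    (hker : ∀ v : Fin m → Fin n → ℝ,
      A.mulVec (flatten m n v) = 0 → grad m n v = 0 → v = 0) :
    ∃ ρ₀ : ℝ, ∀ ρ₂ : ℝ, ρ₀ ≤ ρ₂ →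
      ∃ c₁ c₂ : ℝ, 0 < c₁ ∧ 0 < c₂ ∧
        ∀ (u uP : Fin m → Fin n → ℝ)
          (h hP b bP : (Fin m → Fin n → ℝ) × (Fin m → Fin n → ℝ)),
          (∀ v, augL m n p A f lam ρ₂ uP h b ≤ augL m n p A f lam ρ₂ v h b) →
          (hP ≠ 0 ∧ ∀ g, g ≠ 0 →
            augL m n p A f lam ρ₂ uP hP b ≤ augL m n p A f lam ρ₂ uP g b) →
          bP = b + grad m n uP - hP →
          ε ≤ pnorm2 m n h → ε ≤ pnorm2 m n hP →
          gradL1 m n u ≤ M → gradL1 m n uP ≤ M →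
          b = (-(gradL1 m n u / (ρ₂ * (pnorm2 m n h) ^ 3))) • h →
          augL m n p A f lam ρ₂ uP hP bP ≤
            augL m n p A f lam ρ₂ u h b
              - c₁ * mnorm2sq m n (uP - u) - c₂ * pnorm2sq m n (hP - h) :=
  stmt1_general m n p A f lam ε M hlam hε hM hker
end

section
/- Let m, n be positive integers, let A be a real p×(mn) matrix with ker(A) ∩ ker(∇) = {0}, let σ > 0 be such that ‖Av‖₂² + ‖∇v‖₂² ≥ σ‖v‖₂² for all v ∈ ℝ^{m×n}, let f ∈ ℝ^p, and let λ, ρ₂ be reals with 0 < λ ≤ ρ₂. Fix h ∈ ℝ^{m×n} × ℝ^{m×n} with h ≠ 0 and b ∈ ℝ^{m×n} × ℝ^{m×n}, and define F(u) = ‖∇u‖₁/‖h‖₂ + (λ/2)‖Au − f‖₂² + ρ₂⟨b, ∇u − h⟩ + (ρ₂/2)‖h − ∇u‖₂². Then F is strongly convex with parameter σλ, and if u⁺ is a global minimizer of F, then for every u ∈ ℝ^{m×n}, F(u⁺) ≤ F(u) − (σλ/2)‖u⁺ − u‖₂². -/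
open Finset Filter

/-! ### Auxiliary lemmas -/

private lemma sq_combo (a c X Y Z : ℝ) (hac : a + c = 1) :
    (a * X + c * Y - Z) ^ 2
      = a * (X - Z) ^ 2 + c * (Y - Z) ^ 2 - a * c * (X - Y) ^ 2 := by
  have hc : c = 1 - a := by linarith
  subst hc; ring

private lemma sum_combo {ι : Type*} [Fintype ι] (a c : ℝ) (F G H K : ι → ℝ)
    (hpt : ∀ k, F k = a * G k + c * H k - a * c * K k) :
    ∑ k, F k = a * ∑ k, G k + c * ∑ k, H k - a * c * ∑ k, K k := by
  simp only [Finset.mul_sum, ← Finset.sum_sub_distrib, ← Finset.sum_add_distrib]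
  exact Finset.sum_congr rfl (fun k _ => hpt k)

private lemma sum2_combo {m n : ℕ} (a c : ℝ) (F G H K : Fin m → Fin n → ℝ)
    (hpt : ∀ i j, F i j = a * G i j + c * H i j - a * c * K i j) :
    ∑ i, ∑ j, F i j
      = a * ∑ i, ∑ j, G i j + c * ∑ i, ∑ j, H i j - a * c * ∑ i, ∑ j, K i j :=
  sum_combo a c _ _ _ _ (fun i => sum_combo a c _ _ _ _ (fun j => hpt i j))

private lemma sum2_affine {m n : ℕ} (a c : ℝ) (F G H : Fin m → Fin n → ℝ)
    (hpt : ∀ i j, F i j = a * G i j + c * H i j) :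
    ∑ i, ∑ j, F i j = a * ∑ i, ∑ j, G i j + c * ∑ i, ∑ j, H i j := by
  have h0 : ∀ i j, F i j = a * G i j + c * H i j - a * c * (0 : ℝ) := by
    intro i j; simpa using hpt i j
  have := sum2_combo a c F G H (fun _ _ => 0) h0
  simpa using this

private lemma gradX_comb {m n : ℕ} (a c : ℝ) (x y : Fin m → Fin n → ℝ)
    (i : Fin m) (j : Fin n) :
    gradX m n (a • x + c • y) i j = a * gradX m n x i j + c * gradX m n y i j := by
  simp only [gradX, Pi.add_apply, Pi.smul_apply, smul_eq_mul]
  split_ifs <;> ring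

private lemma gradY_comb {m n : ℕ} (a c : ℝ) (x y : Fin m → Fin n → ℝ)
    (i : Fin m) (j : Fin n) :
    gradY m n (a • x + c • y) i j = a * gradY m n x i j + c * gradY m n y i j := by
  simp only [gradY, Pi.add_apply, Pi.smul_apply, smul_eq_mul]
  split_ifs <;> ring

private lemma gradX_sub {m n : ℕ} (x y : Fin m → Fin n → ℝ) (i : Fin m) (j : Fin n) :
    gradX m n (x - y) i j = gradX m n x i j - gradX m n y i j := by
  simp only [gradX, Pi.sub_apply]
  split_ifs <;> ring

private lemma gradY_sub {m n : ℕ} (x y : Fin m → Fin n → ℝ) (i : Fin m) (j : Fin n) :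
    gradY m n (x - y) i j = gradY m n x i j - gradY m n y i j := by
  simp only [gradY, Pi.sub_apply]
  split_ifs <;> ring

private lemma mulVec_comb {m n p : ℕ} (A : Matrix (Fin p) (Fin m × Fin n) ℝ)
    (a c : ℝ) (x y : Fin m → Fin n → ℝ) :
    A.mulVec (flatten m n (a • x + c • y))
      = a • A.mulVec (flatten m n x) + c • A.mulVec (flatten m n y) := by
  have hf : flatten m n (a • x + c • y)
      = a • flatten m n x + c • flatten m n y := rfl
  rw [hf, Matrix.mulVec_add, Matrix.mulVec_smul, Matrix.mulVec_smul]

private lemma mulVec_sub' {m n p : ℕ} (A : Matrix (Fin p) (Fin m × Fin n) ℝ)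
    (x y : Fin m → Fin n → ℝ) :
    A.mulVec (flatten m n (x - y))
      = A.mulVec (flatten m n x) - A.mulVec (flatten m n y) := by
  have hf : flatten m n (x - y) = flatten m n x - flatten m n y := rfl
  rw [hf, Matrix.mulVec_sub]

private lemma mnorm2sq_nonneg (m n : ℕ) (u : Fin m → Fin n → ℝ) :
    0 ≤ mnorm2sq m n u := by
  unfold mnorm2sq; positivity

private lemma vnorm2sq_nonneg (p : ℕ) (v : Fin p → ℝ) : 0 ≤ vnorm2sq p v := by
  unfold vnorm2sq; positivity

private lemma pnorm2sq_nonneg (m n : ℕ)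
    (h : (Fin m → Fin n → ℝ) × (Fin m → Fin n → ℝ)) : 0 ≤ pnorm2sq m n h :=
  add_nonneg (mnorm2sq_nonneg m n h.1) (mnorm2sq_nonneg m n h.2)

private lemma mnorm2sq_eq_zero {m n : ℕ} {u : Fin m → Fin n → ℝ}
    (h0 : mnorm2sq m n u = 0) : u = 0 := by
  funext i j
  show u i j = 0
  by_contra hne
  have h1 : 0 < (u i j) ^ 2 := by positivity
  have h2 : (u i j) ^ 2 ≤ mnorm2sq m n u := by
    unfold mnorm2sq
    calc (u i j) ^ 2 ≤ ∑ j', (u i j') ^ 2 :=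
          Finset.single_le_sum (f := fun j' => (u i j') ^ 2)
            (fun _ _ => sq_nonneg _) (Finset.mem_univ j)
      _ ≤ ∑ i', ∑ j', (u i' j') ^ 2 :=
          Finset.single_le_sum (f := fun i' => ∑ j', (u i' j') ^ 2)
            (fun _ _ => Finset.sum_nonneg fun _ _ => sq_nonneg _)
            (Finset.mem_univ i)
  linarith

private lemma pnorm2_pos {m n : ℕ}
    {h : (Fin m → Fin n → ℝ) × (Fin m → Fin n → ℝ)} (hh : h ≠ 0) :
    0 < pnorm2 m n h := by
  rcases lt_or_eq_of_le (pnorm2sq_nonneg m n h) with hlt | heq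
  · exact Real.sqrt_pos.mpr hlt
  · exfalso
    apply hh
    have h1 : mnorm2sq m n h.1 = 0 := by
      have := mnorm2sq_nonneg m n h.1
      have := mnorm2sq_nonneg m n h.2
      unfold pnorm2sq at heq; linarith
    have h2 : mnorm2sq m n h.2 = 0 := by
      have := mnorm2sq_nonneg m n h.1
      unfold pnorm2sq at heq; linarith
    have e1 := mnorm2sq_eq_zero h1
    have e2 := mnorm2sq_eq_zero h2
    exact Prod.ext e1 e2

private lemma mnorm2sq_sub_comm (m n : ℕ) (x y : Fin m → Fin n → ℝ) :
    mnorm2sq m n (x - y) = mnorm2sq m n (y - x) := by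
  unfold mnorm2sq
  refine Finset.sum_congr rfl fun i _ => Finset.sum_congr rfl fun j _ => ?_
  simp only [Pi.sub_apply]; ring

private lemma gradL1_comb {m n : ℕ} (a c : ℝ) (ha : 0 ≤ a) (hc : 0 ≤ c)
    (x y : Fin m → Fin n → ℝ) :
    gradL1 m n (a • x + c • y) ≤ a * gradL1 m n x + c * gradL1 m n y := by
  unfold gradL1
  rw [Finset.mul_sum, Finset.mul_sum, ← Finset.sum_add_distrib]
  refine Finset.sum_le_sum fun i _ => ?_
  rw [Finset.mul_sum, Finset.mul_sum, ← Finset.sum_add_distrib]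
  refine Finset.sum_le_sum fun j _ => ?_
  rw [gradX_comb, gradY_comb]
  have h1 : |a * gradX m n x i j + c * gradX m n y i j|
      ≤ a * |gradX m n x i j| + c * |gradX m n y i j| :=
    (abs_add_le _ _).trans (by rw [abs_mul, abs_mul, abs_of_nonneg ha, abs_of_nonneg hc])
  have h2 : |a * gradY m n x i j + c * gradY m n y i j|
      ≤ a * |gradY m n x i j| + c * |gradY m n y i j| :=
    (abs_add_le _ _).trans (by rw [abs_mul, abs_mul, abs_of_nonneg ha, abs_of_nonneg hc])
  linarith

private lemma mnorm2sq_comb {m n : ℕ} (a c : ℝ) (hac : a + c = 1)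
    (x y : Fin m → Fin n → ℝ) :
    mnorm2sq m n (a • x + c • y)
      = a * mnorm2sq m n x + c * mnorm2sq m n y - a * c * mnorm2sq m n (x - y) := by
  unfold mnorm2sq
  refine sum2_combo a c _ _ _ _ fun i j => ?_
  simp only [Pi.add_apply, Pi.smul_apply, Pi.sub_apply, smul_eq_mul]
  have hc : c = 1 - a := by linarith
  subst hc; ring

/-- The key strong-convexity combination inequality for the augmented Lagrangian. -/
private lemma augL_combo (m n p : ℕ) (A : Matrix (Fin p) (Fin m × Fin n) ℝ)
    (f : Fin p → ℝ) (lam ρ₂ : ℝ)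
    (h bb : (Fin m → Fin n → ℝ) × (Fin m → Fin n → ℝ))
    (hP : 0 < pnorm2 m n h)
    (a c : ℝ) (ha : 0 ≤ a) (hc : 0 ≤ c) (hac : a + c = 1)
    (x y : Fin m → Fin n → ℝ) :
    augL m n p A f lam ρ₂ (a • x + c • y) h bb
      ≤ a * augL m n p A f lam ρ₂ x h bb + c * augL m n p A f lam ρ₂ y h bb
        - a * c * (lam / 2 * vnorm2sq p (A.mulVec (flatten m n (x - y)))
            + ρ₂ / 2 * pnorm2sq m n (grad m n (x - y))) := by
  -- L1 part
  have hS : gradL1 m n (a • x + c • y) / pnorm2 m n h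
      ≤ a * (gradL1 m n x / pnorm2 m n h) + c * (gradL1 m n y / pnorm2 m n h) := by
    have h1 := gradL1_comb a c ha hc x y
    calc gradL1 m n (a • x + c • y) / pnorm2 m n h
        ≤ (a * gradL1 m n x + c * gradL1 m n y) / pnorm2 m n h :=
          (div_le_div_iff_of_pos_right hP).mpr h1
      _ = a * (gradL1 m n x / pnorm2 m n h) + c * (gradL1 m n y / pnorm2 m n h) := by
          rw [add_div, mul_div_assoc, mul_div_assoc]
  -- data-fidelity part
  have E1 : vnorm2sq p (A.mulVec (flatten m n (a • x + c • y)) - f)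
      = a * vnorm2sq p (A.mulVec (flatten m n x) - f)
        + c * vnorm2sq p (A.mulVec (flatten m n y) - f)
        - a * c * vnorm2sq p (A.mulVec (flatten m n (x - y))) := by
    unfold vnorm2sq
    refine sum_combo a c _ _ _ _ fun k => ?_
    have hz : A.mulVec (flatten m n (a • x + c • y)) k
        = a * A.mulVec (flatten m n x) k + c * A.mulVec (flatten m n y) k := by
      rw [mulVec_comb]; simp [Pi.add_apply, Pi.smul_apply, smul_eq_mul]
    have hd : A.mulVec (flatten m n (x - y)) k
        = A.mulVec (flatten m n x) k - A.mulVec (flatten m n y) k := by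
      rw [mulVec_sub']; simp [Pi.sub_apply]
    simp only [Pi.sub_apply, hz, hd]
    exact sq_combo a c _ _ _ hac
  -- linear (multiplier) part
  have E2 : pinner m n bb (grad m n (a • x + c • y) - h)
      = a * pinner m n bb (grad m n x - h) + c * pinner m n bb (grad m n y - h) := by
    unfold pinner minner
    have e1 : ∑ i, ∑ j, bb.1 i j * (grad m n (a • x + c • y) - h).1 i j
        = a * ∑ i, ∑ j, bb.1 i j * (grad m n x - h).1 i j
          + c * ∑ i, ∑ j, bb.1 i j * (grad m n y - h).1 i j := by
      refine sum2_affine a c _ _ _ fun i j => ?_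
      show bb.1 i j * (gradX m n (a • x + c • y) i j - h.1 i j) = _
      rw [gradX_comb]
      have hc' : c = 1 - a := by linarith
      subst hc'
      show _ = a * (bb.1 i j * (gradX m n x i j - h.1 i j))
        + (1 - a) * (bb.1 i j * (gradX m n y i j - h.1 i j))
      ring
    have e2 : ∑ i, ∑ j, bb.2 i j * (grad m n (a • x + c • y) - h).2 i j
        = a * ∑ i, ∑ j, bb.2 i j * (grad m n x - h).2 i j
          + c * ∑ i, ∑ j, bb.2 i j * (grad m n y - h).2 i j := by
      refine sum2_affine a c _ _ _ fun i j => ?_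
      show bb.2 i j * (gradY m n (a • x + c • y) i j - h.2 i j) = _
      rw [gradY_comb]
      have hc' : c = 1 - a := by linarith
      subst hc'
      show _ = a * (bb.2 i j * (gradY m n x i j - h.2 i j))
        + (1 - a) * (bb.2 i j * (gradY m n y i j - h.2 i j))
      ring
    rw [e1, e2]; ring
  -- quadratic penalty part
  have E3 : pnorm2sq m n (h - grad m n (a • x + c • y))
      = a * pnorm2sq m n (h - grad m n x) + c * pnorm2sq m n (h - grad m n y)
        - a * c * pnorm2sq m n (grad m n (x - y)) := by
    unfold pnorm2sq mnorm2sq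
    have e1 : ∑ i, ∑ j, ((h - grad m n (a • x + c • y)).1 i j) ^ 2
        = a * ∑ i, ∑ j, ((h - grad m n x).1 i j) ^ 2
          + c * ∑ i, ∑ j, ((h - grad m n y).1 i j) ^ 2
          - a * c * ∑ i, ∑ j, ((grad m n (x - y)).1 i j) ^ 2 := by
      refine sum2_combo a c _ _ _ _ fun i j => ?_
      show (h.1 i j - gradX m n (a • x + c • y) i j) ^ 2
        = a * (h.1 i j - gradX m n x i j) ^ 2 + c * (h.1 i j - gradX m n y i j) ^ 2
          - a * c * (gradX m n (x - y) i j) ^ 2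
      rw [gradX_comb, gradX_sub]
      have hc' : c = 1 - a := by linarith
      subst hc'; ring
    have e2 : ∑ i, ∑ j, ((h - grad m n (a • x + c • y)).2 i j) ^ 2
        = a * ∑ i, ∑ j, ((h - grad m n x).2 i j) ^ 2
          + c * ∑ i, ∑ j, ((h - grad m n y).2 i j) ^ 2
          - a * c * ∑ i, ∑ j, ((grad m n (x - y)).2 i j) ^ 2 := by
      refine sum2_combo a c _ _ _ _ fun i j => ?_
      show (h.2 i j - gradY m n (a • x + c • y) i j) ^ 2
        = a * (h.2 i j - gradY m n x i j) ^ 2 + c * (h.2 i j - gradY m n y i j) ^ 2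
          - a * c * (gradY m n (x - y) i j) ^ 2
      rw [gradY_comb, gradY_sub]
      have hc' : c = 1 - a := by linarith
      subst hc'; ring
    rw [e1, e2]; ring
  -- assemble
  show gradL1 m n (a • x + c • y) / pnorm2 m n h
      + lam / 2 * vnorm2sq p (A.mulVec (flatten m n (a • x + c • y)) - f)
      + ρ₂ * pinner m n bb (grad m n (a • x + c • y) - h)
      + ρ₂ / 2 * pnorm2sq m n (h - grad m n (a • x + c • y)) ≤ _
  rw [E1, E2, E3]
  have goal2 : gradL1 m n (a • x + c • y) / pnorm2 m n h
      ≤ a * (gradL1 m n x / pnorm2 m n h) + c * (gradL1 m n y / pnorm2 m n h) := hS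
  unfold augL
  nlinarith [goal2]

/-- Paper's Lemma A.4: strong convexity of the augmented Lagrangian in `u`
(with parameter `σλ`) and sufficient decrease at a global minimizer. -/
theorem stmt14 (m n p : ℕ) (hm : 0 < m) (hn : 0 < n)
    (A : Matrix (Fin p) (Fin m × Fin n) ℝ) (f : Fin p → ℝ)
    (σ lam ρ₂ : ℝ) (hσ : 0 < σ)
    (hker : ∀ v : Fin m → Fin n → ℝ,
      A.mulVec (flatten m n v) = 0 → grad m n v = 0 → v = 0)
    (hσ' : ∀ v : Fin m → Fin n → ℝ,
      σ * mnorm2sq m n v ≤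
        vnorm2sq p (A.mulVec (flatten m n v)) + pnorm2sq m n (grad m n v))
    (hlam : 0 < lam) (hlr : lam ≤ ρ₂)
    (h : (Fin m → Fin n → ℝ) × (Fin m → Fin n → ℝ)) (hh : h ≠ 0)
    (b : (Fin m → Fin n → ℝ) × (Fin m → Fin n → ℝ)) :
    ConvexOn ℝ Set.univ
        (fun u : Fin m → Fin n → ℝ =>
          augL m n p A f lam ρ₂ u h b - σ * lam / 2 * mnorm2sq m n u) ∧
      ∀ uP : Fin m → Fin n → ℝ,
        (∀ u, augL m n p A f lam ρ₂ uP h b ≤ augL m n p A f lam ρ₂ u h b) →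
        ∀ u, augL m n p A f lam ρ₂ uP h b ≤
          augL m n p A f lam ρ₂ u h b - σ * lam / 2 * mnorm2sq m n (uP - u) := by
  have hP : 0 < pnorm2 m n h := pnorm2_pos hh
  -- strong convexity combination inequality with modulus σ·λ
  have strong : ∀ (a c : ℝ), 0 ≤ a → 0 ≤ c → a + c = 1 → ∀ x y : Fin m → Fin n → ℝ,
      augL m n p A f lam ρ₂ (a • x + c • y) h b
        ≤ a * augL m n p A f lam ρ₂ x h b + c * augL m n p A f lam ρ₂ y h b
          - a * c * (σ * lam / 2 * mnorm2sq m n (x - y)) := by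
    intro a c ha hc hac x y
    have h1 := augL_combo m n p A f lam ρ₂ h b hP a c ha hc hac x y
    have h2 := hσ' (x - y)
    have h3 := pnorm2sq_nonneg m n (grad m n (x - y))
    have h4 := vnorm2sq_nonneg p (A.mulVec (flatten m n (x - y)))
    have h5 : σ * lam / 2 * mnorm2sq m n (x - y)
        ≤ lam / 2 * vnorm2sq p (A.mulVec (flatten m n (x - y)))
          + ρ₂ / 2 * pnorm2sq m n (grad m n (x - y)) := by
      have h5' := mul_le_mul_of_nonneg_left h2 (by positivity : (0:ℝ) ≤ lam / 2)
      have h5'' : 0 ≤ (ρ₂ / 2 - lam / 2) * pnorm2sq m n (grad m n (x - y)) :=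
        mul_nonneg (by linarith) h3
      nlinarith [h5', h5'']
    have hac2 : 0 ≤ a * c := mul_nonneg ha hc
    have h6 := mul_le_mul_of_nonneg_left h5 hac2
    linarith [h1, h6]
  constructor
  · refine ⟨convex_univ, ?_⟩
    intro x _ y _ a c ha hc hac
    simp only [smul_eq_mul]
    have hst := strong a c ha hc hac x y
    have hm2 := mnorm2sq_comb a c hac x y
    rw [hm2]
    nlinarith [hst]
  · intro uP hmin u
    have hMs : mnorm2sq m n (u - uP) = mnorm2sq m n (uP - u) :=
      mnorm2sq_sub_comm m n u uP
    have key : ∀ t : ℝ, 0 < t → t ≤ 1 →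
        augL m n p A f lam ρ₂ uP h b
          ≤ augL m n p A f lam ρ₂ u h b
            - (1 - t) * (σ * lam / 2 * mnorm2sq m n (uP - u)) := by
      intro t ht0 ht1
      have h1 := hmin (t • u + (1 - t) • uP)
      have h2 := strong t (1 - t) ht0.le (by linarith) (by ring) u uP
      have h3 := h1.trans h2
      rw [hMs] at h3
      have h4 : t * augL m n p A f lam ρ₂ uP h b
          ≤ t * (augL m n p A f lam ρ₂ u h b
              - (1 - t) * (σ * lam / 2 * mnorm2sq m n (uP - u))) := by
        nlinarith [h3]
      exact le_of_mul_le_mul_left h4 ht0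
    have hM0 : 0 ≤ σ * lam / 2 * mnorm2sq m n (uP - u) :=
      mul_nonneg (by positivity) (mnorm2sq_nonneg m n (uP - u))
    refine le_of_forall_pos_le_add ?_
    intro ε hε
    by_cases hC : σ * lam / 2 * mnorm2sq m n (uP - u) = 0
    · have h1 := key 1 one_pos le_rfl
      rw [hC] at h1 ⊢
      linarith
    · have hCpos : 0 < σ * lam / 2 * mnorm2sq m n (uP - u) :=
        lt_of_le_of_ne hM0 (Ne.symm hC)
      set C := σ * lam / 2 * mnorm2sq m n (uP - u) with hCdef
      have ht0 : 0 < min 1 (ε / C) := lt_min one_pos (div_pos hε hCpos)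
      have h5 := key (min 1 (ε / C)) ht0 (min_le_left _ _)
      have h6 : min 1 (ε / C) * C ≤ ε := by
        have hle : min 1 (ε / C) ≤ ε / C := min_le_right _ _
        calc min 1 (ε / C) * C ≤ (ε / C) * C :=
              mul_le_mul_of_nonneg_right hle hCpos.le
          _ = ε := div_mul_cancel₀ ε (ne_of_gt hCpos)
      nlinarith [h5, h6]
end
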